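/- arXiv:1010.2253 — 4 statements merged into one kernel-verified Lean document; each statement's English description precedes it below -/
import Mathlib

section
/- There is no 2-dimensional flag simplicial complex with f-vector (1,7,16,11); that is, no graph G on 7 vertices with 16 edges, exactly 11 triangles, and no clique of size 4. -/
/-!
By Turán's theorem a `K₄`-free graph on 7 vertices has at most as many edges as the Turán graph
`T(7,3) = K_{3,2,2}`, namely 16, and attains this bound only if it is isomorphic to `T(7,3)`.
So the graph in question would be `K_{3,2,2}`, which has `3 · 2 · 2 = 12` triangles, not 11.
-/

open Finset Fintype

namespace SimpleGraph

variable {V W : Type*} [Fintype V] [Fintype W] {G : SimpleGraph V} {H : SimpleGraph W}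
  [DecidableRel G.Adj] [DecidableRel H.Adj]

theorem Iso.card_cliqueFinset_eq [DecidableEq V] [DecidableEq W] (f : G ≃g H) (n : ℕ) :
    #(G.cliqueFinset n) = #(H.cliqueFinset n) := by
  have hH : H = G.map f.toEquiv := by
    ext v w
    rw [map_adj']
    constructor
    · intro h
      exact ⟨h.ne, f.symm v, f.symm w, f.symm.map_adj_iff.2 h, by simp, by simp⟩
    · rintro ⟨-, a, b, h, rfl, rfl⟩
      exact f.map_adj_iff.2 h
  have hcliques : H.cliqueFinset n = (G.map f.toEquiv).cliqueFinset n := by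
    ext
    simp only [mem_cliqueFinset_iff, hH]
  rw [hcliques, cliqueFinset_map_of_equiv, card_map]

theorem nonempty_iso_turanGraph_of_card_edgeFinset_eq {r : ℕ} (hr : 0 < r)
    (hG : G.CliqueFree (r + 1)) (he : #G.edgeFinset = #(turanGraph (card V) r).edgeFinset) :
    Nonempty (G ≃g turanGraph (card V) r) := by
  refine (isTuranMaximal_iff_nonempty_iso_turanGraph hr).1 ⟨hG, fun K _ hK => ?_⟩
  obtain ⟨J, _, hJ⟩ := exists_isTuranMaximal (V := V) hr
  calc #K.edgeFinset ≤ #J.edgeFinset := hJ.2 hK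
    _ = #G.edgeFinset := by rw [he, hJ.nonempty_iso_turanGraph.some.card_edgeFinset_eq]

theorem card_edgeFinset_turanGraph_seven_three : #(turanGraph 7 3).edgeFinset = 16 := by
  decide

theorem card_cliqueFinset_three_turanGraph_seven_three :
    #((turanGraph 7 3).cliqueFinset 3) = 12 := by
  decide

end SimpleGraph

open SimpleGraph

/-- There is no 2-dimensional flag simplicial complex with f-vector `(1,7,16,11)`:
no graph on 7 vertices with 16 edges, exactly 11 triangles, and no clique of size 4. -/
theorem no_flag_complex_with_f_vector_1_7_16_11
    (G : SimpleGraph (Fin 7)) [DecidableRel G.Adj] :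
    ¬ (G.edgeFinset.card = 16 ∧ (G.cliqueFinset 3).card = 11 ∧ G.CliqueFree 4) := by
  rintro ⟨hedges, htriangles, hK₄⟩
  obtain ⟨f⟩ := nonempty_iso_turanGraph_of_card_edgeFinset_eq (r := 3) (by norm_num) hK₄
    (by rw [hedges, Fintype.card_fin, card_edgeFinset_turanGraph_seven_three])
  rw [Fintype.card_fin] at f
  have htriangles_eq := f.card_cliqueFinset_eq 3
  rw [htriangles, card_cliqueFinset_three_turanGraph_seven_three] at htriangles_eq
  exact absurd htriangles_eq (by norm_num)
end

section
/- If G is a graph whose pendant edges form a perfect matching, then every maximal independent set of G has size equal to the number of pendant edges of G, i.e., half the number of vertices of G. -/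
/-!
Every vertex of `S` lies in exactly one pendant edge, and every pendant edge contains exactly one
vertex of `S`: at most one because an edge cannot join two vertices of an independent set, and at
least one by maximality, since if a pendant edge with leaf `w` avoided `S`, the only neighbour of
`w` would lie outside `S` and `S ∪ {w}` would still be independent. Counting incidences between
`S` and the set `M` of pendant edges gives `|S| = |M|`; counting incidences between all vertices and `M`,
which partitions the vertices into pairs, gives `|V| = 2 |M|`.
-/

variable {V : Type*} [Fintype V] [DecidableEq V]

/-- A set of vertices is independent if no two of its elements are adjacent. -/
def SimpleGraph.IsIndepSet' (G : SimpleGraph V) (S : Set V) : Prop :=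
  S.Pairwise fun u v => ¬ G.Adj u v

/-- The set of pendant edges of `G`: edges incident to a vertex of degree 1. -/
def pendantEdges (G : SimpleGraph V) [DecidableRel G.Adj] : Set (Sym2 V) :=
  {e | e ∈ G.edgeSet ∧ ∃ v ∈ e, G.degree v = 1}

namespace Set

variable {α β : Type*}

theorem ncard_eq_one_of_existsUnique {s : Set α} (h : ∃! a, a ∈ s) : s.ncard = 1 := by
  obtain ⟨a, ha, huniq⟩ := h
  exact ncard_eq_one.2 ⟨a, eq_singleton_iff_unique_mem.2 ⟨ha, huniq⟩⟩

theorem ncard_mul_eq_ncard_mul [Finite α] [Finite β] (r : α → β → Prop) {s : Set α} {t : Set β}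
    {m n : ℕ} (hm : ∀ a ∈ s, {b ∈ t | r a b}.ncard = m)
    (hn : ∀ b ∈ t, {a ∈ s | r a b}.ncard = n) : s.ncard * m = t.ncard * n := by
  classical
  have := Fintype.ofFinite α
  have := Fintype.ofFinite β
  simp only [ncard_eq_toFinset_card']
  refine Finset.card_mul_eq_card_mul r (fun a ha => ?_) (fun b hb => ?_)
  · rw [← ncard_coe_finset, Finset.coe_bipartiteAbove]
    simpa only [mem_toFinset] using hm a (mem_toFinset.1 ha)
  · rw [← ncard_coe_finset, Finset.coe_bipartiteBelow]
    simpa only [mem_toFinset] using hn b (mem_toFinset.1 hb)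

theorem ncard_eq_ncard_of_existsUnique [Finite α] [Finite β] (r : α → β → Prop) {s : Set α}
    {t : Set β} (hs : ∀ a ∈ s, ∃! b, b ∈ t ∧ r a b) (ht : ∀ b ∈ t, ∃! a, a ∈ s ∧ r a b) :
    s.ncard = t.ncard := by
  simpa using ncard_mul_eq_ncard_mul r (fun a ha => ncard_eq_one_of_existsUnique (hs a ha))
    (fun b hb => ncard_eq_one_of_existsUnique (ht b hb))

end Set

namespace Sym2

variable {α : Type*}

theorem ncard_setOf_mem_of_not_isDiag {e : Sym2 α} (he : ¬ e.IsDiag) : {a | a ∈ e}.ncard = 2 := by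
  induction e using Sym2.ind with
  | _ x y =>
    have hxy : x ≠ y := by simpa using he
    have hset : {a | a ∈ s(x, y)} = {x, y} := by ext; simp
    rw [hset, Set.ncard_pair hxy]

theorem two_mul_ncard_eq_card_of_existsUnique_mem [Fintype α] {M : Set (Sym2 α)}
    (hM : ∀ e ∈ M, ¬ e.IsDiag) (h : ∀ a, ∃! e, e ∈ M ∧ a ∈ e) : 2 * M.ncard = Fintype.card α := by
  have hcount := Set.ncard_mul_eq_ncard_mul (fun a e => a ∈ e) (s := Set.univ) (t := M)
    (fun a _ => Set.ncard_eq_one_of_existsUnique (h a))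
    (fun e he => by simpa using ncard_setOf_mem_of_not_isDiag (hM e he))
  rw [Set.ncard_univ, Nat.card_eq_fintype_card] at hcount
  omega

end Sym2

namespace SimpleGraph

variable {α : Type*} {G : SimpleGraph α} {S : Set α}

theorem IsIndepSet.insert {a : α} (hS : G.IsIndepSet S) (ha : ∀ b ∈ S, ¬ G.Adj a b) :
    G.IsIndepSet (insert a S) := by
  rw [← isClique_compl] at hS ⊢
  exact hS.insert fun b hb hab => (compl_adj G a b).2 ⟨hab, ha b hb⟩

theorem exists_adj_mem_of_maximal_isIndepSet (hS : Maximal G.IsIndepSet S) {v : α} (hv : v ∉ S) :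
    ∃ w ∈ S, G.Adj v w := by
  by_contra! h
  exact hv (hS.2 (hS.1.insert h) (Set.subset_insert v S) (Set.mem_insert v S))

theorem IsIndepSet.eq_of_mem_of_mem_edgeSet (hS : G.IsIndepSet S) {e : Sym2 α} (he : e ∈ G.edgeSet)
    {u v : α} (hu : u ∈ S) (hv : v ∈ S) (hue : u ∈ e) (hve : v ∈ e) : u = v := by
  by_contra huv
  rw [(Sym2.mem_and_mem_iff huv).1 ⟨hue, hve⟩, mem_edgeSet] at he
  exact hS hu hv huv he

theorem exists_mem_of_maximal_isIndepSet_of_degree_eq_one {w : α} [Fintype (G.neighborSet w)]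
    (hS : Maximal G.IsIndepSet S) {e : Sym2 α} (he : e ∈ G.edgeSet) (hwe : w ∈ e)
    (hw : G.degree w = 1) : ∃ v ∈ S, v ∈ e := by
  by_cases hwS : w ∈ S
  · exact ⟨w, hwS, hwe⟩
  obtain ⟨x, rfl⟩ := Sym2.mem_iff_exists.1 hwe
  obtain ⟨u, huS, hwu⟩ := exists_adj_mem_of_maximal_isIndepSet hS hwS
  have hux : u = x := (degree_eq_one_iff_existsUnique_adj.1 hw).unique hwu he
  exact ⟨u, huS, hux ▸ Sym2.mem_mk_right w x⟩

theorem existsUnique_mem_of_mem_pendantEdges [Fintype α] [DecidableRel G.Adj]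
    (hS : Maximal G.IsIndepSet S) {e : Sym2 α} (he : e ∈ pendantEdges G) : ∃! v, v ∈ S ∧ v ∈ e := by
  obtain ⟨hedge, w, hwe, hw⟩ := he
  obtain ⟨v, hvS, hve⟩ := exists_mem_of_maximal_isIndepSet_of_degree_eq_one hS hedge hwe hw
  exact ⟨v, ⟨hvS, hve⟩, fun u ⟨huS, hue⟩ => hS.1.eq_of_mem_of_mem_edgeSet hedge huS hvS hue hve⟩

end SimpleGraph

/-- If the pendant edges of `G` form a perfect matching (every vertex lies in exactly
one pendant edge), then every maximal independent set of `G` has size equal to the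
number of pendant edges, i.e., half the number of vertices. -/
theorem maximal_indep_card_of_pendant_perfect_matching
    (G : SimpleGraph V) [DecidableRel G.Adj]
    (hpm : ∀ v : V, ∃! e, e ∈ pendantEdges G ∧ v ∈ e)
    (S : Set V) (hS : G.IsIndepSet' S)
    (hmax : ∀ T : Set V, G.IsIndepSet' T → S ⊆ T → S = T) :
    S.ncard = (pendantEdges G).ncard ∧ 2 * S.ncard = Fintype.card V := by
  have hSmax : Maximal G.IsIndepSet S := ⟨hS, fun T hT hST => (hmax T hT hST).ge⟩
  have hcard : S.ncard = (pendantEdges G).ncard :=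
    Set.ncard_eq_ncard_of_existsUnique (fun v e => v ∈ e) (fun v _ => hpm v)
      fun e he => SimpleGraph.existsUnique_mem_of_mem_pendantEdges hSmax he
  refine ⟨hcard, hcard ▸ ?_⟩
  exact Sym2.two_mul_ncard_eq_card_of_existsUnique_mem
    (fun e he => G.not_isDiag_of_mem_edgeSet he.1) hpm
end

section
/- If G is a graph with girth at least 8 (every cycle of G has length at least 8) and the pendant edges of G form a perfect matching, then G is well-covered: all maximal independent sets of G have the same cardinality. -/
variable {V : Type*} [Fintype V] [DecidableEq V]

/-- A set of vertices is independent if no two of its elements are adjacent. -/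
def SimpleGraph.IsIndepSetV (G : SimpleGraph V) (S : Set V) : Prop :=
  S.Pairwise fun u v => ¬ G.Adj u v

/-!
Every vertex lies in exactly one pendant edge, so the pendant edges partition the vertex set.
An independent set contains at most one endpoint of each of them, and a maximal one contains at
least one: if neither endpoint of a pendant edge `s(v, u)` with `deg v = 1` were in `S`, then `v`
could be added to `S`, its only neighbour `u` being outside `S`. Hence every maximal independent
set has as many vertices as there are pendant edges.
-/

namespace SimpleGraph

variable {W : Type*} {G : SimpleGraph W} {S : Set W}

theorem IsIndepSetV.insert (hS : G.IsIndepSetV S) {v : W} (hv : ∀ w ∈ S, ¬ G.Adj v w) :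
    G.IsIndepSetV (insert v S) :=
  Set.pairwise_insert.mpr ⟨hS, fun w hw _ => ⟨hv w hw, fun hwv => hv w hw hwv.symm⟩⟩

theorem IsIndepSetV.mem_or_mem_of_adj_of_degree_eq_one
    (hS : G.IsIndepSetV S) (hSmax : ∀ S', G.IsIndepSetV S' → S ⊆ S' → S = S')
    {u v : W} [Fintype (G.neighborSet v)] (hv : G.degree v = 1) (hvu : G.Adj v u) :
    v ∈ S ∨ u ∈ S := by
  refine or_iff_not_imp_right.mpr fun hu => ?_
  obtain ⟨u', -, hu'⟩ := degree_eq_one_iff_existsUnique_adj.mp hv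
  have hv_nbrs : ∀ w ∈ S, ¬ G.Adj v w := fun w hw hvw =>
    hu (hu' u hvu ▸ hu' w hvw ▸ hw)
  rw [hSmax _ (hS.insert hv_nbrs) (Set.subset_insert v S)]
  exact Set.mem_insert v S

theorem IsIndepSetV.ncard_eq_of_forall_existsUnique_mem {M : Set (Sym2 W)}
    (hM : M ⊆ G.edgeSet) (hpm : ∀ v, ∃! e, e ∈ M ∧ v ∈ e) (hS : G.IsIndepSetV S)
    (hmeet : ∀ e ∈ M, ∃ v ∈ S, v ∈ e) : S.ncard = M.ncard := by
  choose f hf hf_unique using hpm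
  refine Set.ncard_congr (fun v _ => f v) (fun v _ => (hf v).1) ?_ ?_
  · intro x y hx hy hxy
    by_contra hne
    have hedge : s(x, y) ∈ G.edgeSet :=
      (Sym2.mem_and_mem_iff hne).mp ⟨(hf x).2, hxy ▸ (hf y).2⟩ ▸ hM (hf x).1
    exact hS hx hy hne hedge
  · intro e he
    obtain ⟨v, hvS, hve⟩ := hmeet e he
    exact ⟨v, hvS, (hf_unique v e ⟨he, hve⟩).symm⟩

theorem IsIndepSetV.exists_mem_of_mem_pendantEdges [Fintype W] [DecidableRel G.Adj]
    (hS : G.IsIndepSetV S) (hSmax : ∀ S', G.IsIndepSetV S' → S ⊆ S' → S = S') {e : Sym2 W}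
    (he : e ∈ pendantEdges G) : ∃ v ∈ S, v ∈ e := by
  obtain ⟨hedge, v, hve, hv⟩ := he
  obtain ⟨u, rfl⟩ := Sym2.mem_iff_exists.mp hve
  rcases hS.mem_or_mem_of_adj_of_degree_eq_one hSmax hv hedge with hvS | huS
  · exact ⟨v, hvS, Sym2.mem_mk_left v u⟩
  · exact ⟨u, huS, Sym2.mem_mk_right v u⟩

theorem IsIndepSetV.ncard_eq_ncard_pendantEdges [Fintype W] [DecidableRel G.Adj]
    (hpm : ∀ v, ∃! e, e ∈ pendantEdges G ∧ v ∈ e) (hS : G.IsIndepSetV S)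
    (hSmax : ∀ S', G.IsIndepSetV S' → S ⊆ S' → S = S') :
    S.ncard = (pendantEdges G).ncard :=
  hS.ncard_eq_of_forall_existsUnique_mem (fun _ he => he.1) hpm fun _ =>
    hS.exists_mem_of_mem_pendantEdges hSmax

end SimpleGraph

theorem wellCovered_of_girth_ge_eight_of_pendant_matching_general
    (G : SimpleGraph V) [DecidableRel G.Adj]
    (hpm : ∀ v : V, ∃! e, e ∈ pendantEdges G ∧ v ∈ e)
    (S T : Set V)
    (hS : G.IsIndepSetV S) (hSmax : ∀ S', G.IsIndepSetV S' → S ⊆ S' → S = S')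
    (hT : G.IsIndepSetV T) (hTmax : ∀ T', G.IsIndepSetV T' → T ⊆ T' → T = T') :
    S.ncard = T.ncard := by
  rw [hS.ncard_eq_ncard_pendantEdges hpm hSmax, hT.ncard_eq_ncard_pendantEdges hpm hTmax]

/-- If `G` has girth at least 8 and its pendant edges form a perfect matching, then
`G` is well-covered: all maximal independent sets have the same cardinality. -/
theorem wellCovered_of_girth_ge_eight_of_pendant_matching
    (G : SimpleGraph V) [DecidableRel G.Adj]
    (hgirth : 8 ≤ G.egirth)
    (hpm : ∀ v : V, ∃! e, e ∈ pendantEdges G ∧ v ∈ e)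
    (S T : Set V)
    (hS : G.IsIndepSetV S) (hSmax : ∀ S', G.IsIndepSetV S' → S ⊆ S' → S = S')
    (hT : G.IsIndepSetV T) (hTmax : ∀ T', G.IsIndepSetV T' → T ⊆ T' → T = T') :
    S.ncard = T.ncard :=
  wellCovered_of_girth_ge_eight_of_pendant_matching_general G hpm S T hS hSmax hT hTmax
end

section
/- If G is a connected well-covered graph with girth at least 8 and at least 2 vertices, then the pendant edges of G form a perfect matching of G. -/
variable {V : Type*} [Fintype V] [DecidableEq V]

/-!
Suppose a vertex `v` of degree at least two has no leaf neighbour, and extend `{v} ∪ N₂(v)` to a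
maximal independent set `M`. For `P ⊆ M`, the vertices outside `M` all of whose neighbours in `M`
lie in `P` can replace `P` in `M` as soon as they are independent and dominate `P`; in a
well-covered graph they are then exactly as many as `P`. When `P` lies within distance two of `v`
these vertices lie in `N(v) ∪ N₃(v)`, which girth at least `8` makes independent. For two
neighbours `u₁ ≠ u₂` of `v`, take `P₁ = M ∩ N(u₁)`, `P₂ = M ∩ N(u₂)` and `P₁ ∪ P₂`: the sets `P₁`,
`P₂` meet only in `v`, while (no neighbour of `v` being a leaf) their replacement sets are
disjoint, so the count for `P₁ ∪ P₂` comes out one too large. Hence every vertex of degree at least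
two has a leaf neighbour, and it is unique since two leaves at `v` could replace `v` in a maximal
independent set.
-/

namespace SimpleGraph

variable {α : Type*} {G : SimpleGraph α}

section WellCovered

def WellCovered (G : SimpleGraph α) : Prop :=
  ∀ ⦃S T : Set α⦄, Maximal G.IsIndepSet S → Maximal G.IsIndepSet T → S.ncard = T.ncard

theorem maximal_isIndepSet_iff {M : Set α} :
    Maximal G.IsIndepSet M ↔ G.IsIndepSet M ∧ ∀ x ∉ M, ∃ m ∈ M, G.Adj m x := by
  refine ⟨fun hM => ⟨hM.1, fun x hx => ?_⟩, fun ⟨hM, hdom⟩ => ⟨hM, fun S hS hMS x hx => ?_⟩⟩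
  · by_contra! hno
    refine hx (hM.mem_of_prop_insert ?_)
    exact Set.pairwise_insert.2 ⟨hM.1, fun m hm _ => ⟨fun h => hno m hm h.symm, hno m hm⟩⟩
  · by_contra hxM
    obtain ⟨m, hm, hmx⟩ := hdom x hxM
    exact hS (hMS hm) hx (fun h => hxM (h ▸ hm)) hmx

theorem WellCovered.ncard_le [Finite α] (hwc : G.WellCovered) {S M : Set α}
    (hS : G.IsIndepSet S) (hM : Maximal G.IsIndepSet M) : S.ncard ≤ M.ncard := by
  obtain ⟨S', hSS', hS'⟩ := Finite.exists_le_maximal hS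
  exact (Set.ncard_le_ncard hSS').trans (hwc hS' hM).le

theorem WellCovered.eq_of_adj_of_forall_adj_eq [Finite α] (hwc : G.WellCovered) {v l₁ l₂ : α}
    (h₁ : G.Adj v l₁) (h₂ : G.Adj v l₂) (hl₁ : ∀ x, G.Adj l₁ x → x = v)
    (hl₂ : ∀ x, G.Adj l₂ x → x = v) : l₁ = l₂ := by
  by_contra hne
  obtain ⟨M, hvM, hM⟩ :=
    Finite.exists_le_maximal (show G.IsIndepSet {v} from Set.pairwise_singleton _ _)
  have hv : v ∈ M := hvM rfl
  have hlM : ∀ {l}, G.Adj v l → l ∉ M := fun h hl => hM.1 hv hl h.ne h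
  have hfar : ∀ {l}, (∀ x, G.Adj l x → x = v) → ∀ b, b ≠ v → ¬G.Adj l b ∧ ¬G.Adj b l :=
    fun hl b hb => ⟨fun h => hb (hl b h), fun h => hb (hl b h.symm)⟩
  have hind : G.IsIndepSet (insert l₁ (insert l₂ (M \ {v}))) := by
    refine Set.pairwise_insert.2 ⟨Set.pairwise_insert.2 ⟨hM.1.mono Set.sdiff_subset,
      fun b hb _ => hfar hl₂ b hb.2⟩, fun b hb _ => hfar hl₁ b ?_⟩
    rcases hb with rfl | hb
    exacts [h₂.ne.symm, hb.2]
  have hle := hwc.ncard_le hind hM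
  rw [Set.ncard_insert_of_notMem (by rintro (h | h); exacts [hne h, hlM h₁ h.1]),
    Set.ncard_insert_of_notMem fun h => hlM h₂ h.1] at hle
  have := Set.ncard_sdiff_singleton_add_one hv
  omega

def dominatedOnlyBy (G : SimpleGraph α) (M P : Set α) : Set α :=
  {y | y ∉ M ∧ ∀ m ∈ M, G.Adj y m → m ∈ P}

theorem dominatedOnlyBy_mono {M P Q : Set α} (hPQ : P ⊆ Q) :
    G.dominatedOnlyBy M P ⊆ G.dominatedOnlyBy M Q :=
  fun _ ⟨hy, hP⟩ => ⟨hy, fun m hm h => hPQ (hP m hm h)⟩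

theorem dominatedOnlyBy_inter (M P Q : Set α) :
    G.dominatedOnlyBy M P ∩ G.dominatedOnlyBy M Q = G.dominatedOnlyBy M (P ∩ Q) := by
  ext y
  simp only [dominatedOnlyBy, Set.mem_inter_iff, Set.mem_ofPred_eq]
  grind

theorem maximal_isIndepSet_sdiff_union_dominatedOnlyBy {M P : Set α} (hM : Maximal G.IsIndepSet M)
    (hind : G.IsIndepSet (G.dominatedOnlyBy M P))
    (hdom : ∀ p ∈ P, ∃ y ∈ G.dominatedOnlyBy M P, G.Adj y p) :
    Maximal G.IsIndepSet (M \ P ∪ G.dominatedOnlyBy M P) := by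
  rw [maximal_isIndepSet_iff] at hM ⊢
  refine ⟨Set.pairwise_union.2 ⟨hM.1.mono Set.sdiff_subset, hind, ?_⟩, fun x hx => ?_⟩
  · rintro m ⟨hm, hmP⟩ y ⟨-, hy⟩ -
    exact ⟨fun h => hmP (hy m hm h.symm), fun h => hmP (hy m hm h)⟩
  · simp only [Set.mem_union, Set.mem_sdiff, not_or, not_and_not_right] at hx
    by_cases hxM : x ∈ M
    · obtain ⟨y, hy, hyx⟩ := hdom x (hx.1 hxM)
      exact ⟨y, Or.inr hy, hyx⟩
    · obtain ⟨m, hm, hxm, hmP⟩ : ∃ m ∈ M, G.Adj x m ∧ m ∉ P := by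
        simpa [dominatedOnlyBy, hxM] using hx.2
      exact ⟨m, Or.inl ⟨hm, hmP⟩, hxm.symm⟩

theorem WellCovered.ncard_dominatedOnlyBy [Finite α] (hwc : G.WellCovered) {M P : Set α}
    (hM : Maximal G.IsIndepSet M) (hPM : P ⊆ M) (hind : G.IsIndepSet (G.dominatedOnlyBy M P))
    (hdom : ∀ p ∈ P, ∃ y ∈ G.dominatedOnlyBy M P, G.Adj y p) :
    (G.dominatedOnlyBy M P).ncard = P.ncard := by
  have hdisj : Disjoint (M \ P) (G.dominatedOnlyBy M P) :=
    Set.disjoint_left.2 fun _ hx hy => hy.1 hx.1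
  have := hwc (maximal_isIndepSet_sdiff_union_dominatedOnlyBy hM hind hdom) hM
  rw [Set.ncard_union_eq hdisj, Set.ncard_sdiff hPM] at this
  have := Set.ncard_le_ncard hPM
  omega

end WellCovered

section Girth

theorem not_adj_getLast_head {n : ℕ∞} (hg : n ≤ G.egirth) {l : List α} (hne : l ≠ [])
    (hnd : l.Nodup) (hc : l.IsChain G.Adj) (h3 : 3 ≤ l.length) (hn : l.length < n) :
    ¬G.Adj (l.getLast hne) (l.head hne) := by
  intro hclose
  set p := Walk.ofSupport l hne hc
  have hp : p.IsPath := .mk' (by rwa [Walk.support_ofSupport])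
  have hcyc : (Walk.cons hclose p).IsCycle := by
    refine (Walk.cons_isCycle_iff p hclose).2 ⟨hp, fun he => ?_⟩
    have := hp.length_eq_one_of_mem_edges (Sym2.eq_swap ▸ he)
    simp [p] at this
    omega
  have hlen : (Walk.cons hclose p).length = l.length := by simp [p]; omega
  exact (hn.trans_le hg).not_ge (hlen ▸ egirth_le_length hcyc)

/-- `secondNeighborSet v` and `thirdNeighborSet v` are the spheres of radius `2` and `3`
around `v`. -/
def secondNeighborSet (G : SimpleGraph α) (v : α) : Set α :=
  {x | x ≠ v ∧ ¬G.Adj v x ∧ ∃ u, G.Adj v u ∧ G.Adj u x}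

def thirdNeighborSet (G : SimpleGraph α) (v : α) : Set α :=
  {x | x ≠ v ∧ ¬G.Adj v x ∧ x ∉ G.secondNeighborSet v ∧ ∃ z ∈ G.secondNeighborSet v, G.Adj z x}

theorem isIndepSet_neighborSet_of_four_le_egirth (hg : 4 ≤ G.egirth) (v : α) :
    G.IsIndepSet (G.neighborSet v) := by
  intro u (hu : G.Adj v u) u' (hu' : G.Adj v u') _ h
  exact not_adj_getLast_head hg (l := [v, u, u']) (by simp) (by simp; grind [Adj.ne])
    (by simp [hu, h]) (by simp) (by norm_num) hu'.symm

theorem eq_of_adj_of_adj_of_five_le_egirth (hg : 5 ≤ G.egirth) {v u u' m : α} (hu : G.Adj v u)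
    (hu' : G.Adj v u') (hm : G.Adj u m) (hm' : G.Adj u' m) (hmv : m ≠ v) : u = u' := by
  by_contra hne
  have hv : ¬G.Adj v m := fun h =>
    isIndepSet_neighborSet_of_four_le_egirth (hg.trans' (by norm_num)) v hu h (by grind [Adj.ne]) hm
  exact not_adj_getLast_head hg (l := [v, u, m, u']) (by simp) (by simp; grind [Adj.ne])
    (by simp [hu, hm, hm'.symm]) (by simp) (by norm_num) hu'.symm

theorem isIndepSet_insert_secondNeighborSet (hg : 6 ≤ G.egirth) (v : α) :
    G.IsIndepSet (insert v (G.secondNeighborSet v)) := by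
  refine Set.pairwise_insert.2 ⟨?_, fun x hx _ => ⟨hx.2.1, fun h => hx.2.1 h.symm⟩⟩
  rintro x ⟨hxv, hvx, w, hvw, hwx⟩ y ⟨hyv, hvy, w', hvw', hw'y⟩ hxy h
  obtain rfl | hww' := eq_or_ne w w'
  · exact not_adj_getLast_head hg (l := [w, x, y]) (by simp) (by simp; grind [Adj.ne])
      (by simp [hwx, h]) (by simp) (by norm_num) hw'y.symm
  · exact not_adj_getLast_head hg (l := [v, w, x, y, w']) (by simp) (by simp; grind [Adj.ne])
      (by simp [hvw, hwx, h, hw'y.symm]) (by simp) (by norm_num) hvw'.symm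

theorem isIndepSet_neighborSet_union_thirdNeighborSet (hg : 8 ≤ G.egirth) (v : α) :
    G.IsIndepSet (G.neighborSet v ∪ G.thirdNeighborSet v) := by
  refine Set.pairwise_union.2 ⟨isIndepSet_neighborSet_of_four_le_egirth (hg.trans' (by norm_num)) v,
    ?_, fun u hu x hx _ => ?_⟩
  · rintro x ⟨hxv, hvx, hx2, z, hz, hzx⟩ y ⟨hyv, hvy, hy2, z', hz', hz'y⟩ hxy h
    obtain ⟨hzv, hvz, w, hvw, hwz⟩ := id hz
    obtain ⟨hz'v, hvz', w', hvw', hw'z'⟩ := id hz'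
    obtain rfl | hzz' := eq_or_ne z z'
    · exact not_adj_getLast_head hg (l := [z, x, y]) (by simp) (by simp; grind [Adj.ne])
        (by simp [hzx, h]) (by simp) (by norm_num) hz'y.symm
    obtain rfl | hww' := eq_or_ne w w'
    · exact not_adj_getLast_head hg (l := [w, z, x, y, z']) (by simp) (by simp; grind [Adj.ne])
        (by simp [hwz, hzx, h, hz'y.symm]) (by simp) (by norm_num) hw'z'.symm
    · exact not_adj_getLast_head hg (l := [v, w, z, x, y, z', w']) (by simp)
        (by simp; grind [Adj.ne]) (by simp [hvw, hwz, hzx, h, hz'y.symm, hw'z'.symm]) (by simp)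
        (by norm_num) hvw'.symm
  · have hxS : x ∉ G.secondNeighborSet v := hx.2.2.1
    exact ⟨fun h => hxS ⟨hx.1, hx.2.1, u, hu, h⟩, fun h => hxS ⟨hx.1, hx.2.1, u, hu, h.symm⟩⟩

end Girth

section LeafNeighbor

variable {v : α} {M : Set α}

theorem inter_neighborSet_subset_insert_secondNeighborSet (hM : G.IsIndepSet M) (hvM : v ∈ M)
    {u : α} (hu : G.Adj v u) : M ∩ G.neighborSet u ⊆ insert v (G.secondNeighborSet v) := by
  rintro m ⟨hm, hum⟩
  by_cases hmv : m = v
  · exact Or.inl hmv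
  · exact Or.inr ⟨hmv, hM hvM hm (Ne.symm hmv), u, hu, hum⟩

theorem dominatedOnlyBy_subset_neighborSet_union_thirdNeighborSet
    (hM : Maximal G.IsIndepSet M) (hvM : insert v (G.secondNeighborSet v) ⊆ M) {P : Set α}
    (hP : P ⊆ insert v (G.secondNeighborSet v)) :
    G.dominatedOnlyBy M P ⊆ G.neighborSet v ∪ G.thirdNeighborSet v := by
  rintro y ⟨hyM, hyP⟩
  obtain ⟨m, hm, hmy⟩ := (maximal_isIndepSet_iff.1 hM).2 y hyM
  rcases hP (hyP m hm hmy.symm) with rfl | hm₂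
  · exact Or.inl hmy
  by_cases hvy : G.Adj v y
  · exact Or.inl hvy
  · exact Or.inr ⟨fun h => hyM (h ▸ hvM (Set.mem_insert _ _)), hvy, fun h => hyM (hvM (Or.inr h)),
      m, hm₂, hmy⟩

theorem WellCovered.ncard_dominatedOnlyBy_of_subset_insert_secondNeighborSet [Finite α]
    (hwc : G.WellCovered) (hg : 8 ≤ G.egirth) (hM : Maximal G.IsIndepSet M)
    (hvM : insert v (G.secondNeighborSet v) ⊆ M) {P : Set α} (hPM : P ⊆ M)
    (hP : P ⊆ insert v (G.secondNeighborSet v))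
    (hdom : ∀ p ∈ P, ∃ y ∈ G.dominatedOnlyBy M P, G.Adj y p) :
    (G.dominatedOnlyBy M P).ncard = P.ncard :=
  hwc.ncard_dominatedOnlyBy hM hPM ((isIndepSet_neighborSet_union_thirdNeighborSet hg v).mono
    (dominatedOnlyBy_subset_neighborSet_union_thirdNeighborSet hM hvM hP)) hdom

theorem dominatedOnlyBy_singleton_eq_empty (hg : 4 ≤ G.egirth) (hM : Maximal G.IsIndepSet M)
    (hvM : insert v (G.secondNeighborSet v) ⊆ M) (hleaf : ∀ u, G.Adj v u → ∃ x, G.Adj u x ∧ x ≠ v) :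
    G.dominatedOnlyBy M {v} = ∅ := by
  refine Set.eq_empty_of_forall_notMem fun y ⟨hyM, hy⟩ => ?_
  obtain ⟨m, hm, hmy⟩ := (maximal_isIndepSet_iff.1 hM).2 y hyM
  obtain rfl : m = v := hy m hm hmy.symm
  obtain ⟨x, hyx, hxm⟩ := hleaf y hmy
  have hmx : ¬G.Adj m x := fun h =>
    isIndepSet_neighborSet_of_four_le_egirth hg m hmy h hyx.ne hyx
  exact hxm (hy x (hvM (Or.inr ⟨hxm, hmx, y, hmy, hyx⟩)) hyx)

theorem WellCovered.exists_adj_forall_adj_eq [Finite α] (hwc : G.WellCovered)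
    (hg : 8 ≤ G.egirth) {u₁ u₂ : α} (h₁ : G.Adj v u₁) (h₂ : G.Adj v u₂) (hne : u₁ ≠ u₂) :
    ∃ u, G.Adj v u ∧ ∀ x, G.Adj u x → x = v := by
  by_contra! hleaf
  obtain ⟨M, hvM, hM⟩ :=
    Finite.exists_le_maximal (isIndepSet_insert_secondNeighborSet (hg.trans' (by norm_num)) v)
  have hv : v ∈ M := hvM (Set.mem_insert _ _)
  set X := G.dominatedOnlyBy M
  set P₁ := M ∩ G.neighborSet u₁
  set P₂ := M ∩ G.neighborSet u₂
  have hcard : ∀ P ⊆ P₁ ∪ P₂, (∀ p ∈ P, ∃ y ∈ X P, G.Adj y p) → (X P).ncard = P.ncard :=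
    fun P hP => hwc.ncard_dominatedOnlyBy_of_subset_insert_secondNeighborSet hg hM hvM
      (hP.trans (Set.union_subset Set.inter_subset_left Set.inter_subset_left))
      (hP.trans (Set.union_subset (inter_neighborSet_subset_insert_secondNeighborSet hM.1 hv h₁)
        (inter_neighborSet_subset_insert_secondNeighborSet hM.1 hv h₂)))
  have hmem : ∀ {u}, G.Adj v u → u ∈ X (M ∩ G.neighborSet u) :=
    fun hu => ⟨fun h => hM.1 hv h hu.ne hu, fun m hm h => ⟨hm, h⟩⟩
  have hX₁ := hcard P₁ Set.subset_union_left fun p hp => ⟨u₁, hmem h₁, hp.2⟩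
  have hX₂ := hcard P₂ Set.subset_union_right fun p hp => ⟨u₂, hmem h₂, hp.2⟩
  have hX₁₂ := hcard (P₁ ∪ P₂) subset_rfl fun p hp => hp.elim
    (fun hp => ⟨u₁, dominatedOnlyBy_mono Set.subset_union_left (hmem h₁), hp.2⟩)
    (fun hp => ⟨u₂, dominatedOnlyBy_mono Set.subset_union_right (hmem h₂), hp.2⟩)
  -- `P₁` and `P₂` share `v`, but their replacement sets are disjoint.
  have hP : P₁ ∩ P₂ = {v} := by
    refine Set.Subset.antisymm (fun m ⟨⟨_, h₁m⟩, _, h₂m⟩ => by_contra fun hmv => hne ?_)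
      (Set.singleton_subset_iff.2 ⟨⟨hv, h₁.symm⟩, hv, h₂.symm⟩)
    exact eq_of_adj_of_adj_of_five_le_egirth (hg.trans' (by norm_num)) h₁ h₂ h₁m h₂m hmv
  have hdisj : Disjoint (X P₁) (X P₂) := by
    rw [Set.disjoint_iff_inter_eq_empty, dominatedOnlyBy_inter, hP,
      dominatedOnlyBy_singleton_eq_empty (hg.trans' (by norm_num)) hM hvM hleaf]
  have hle : (X P₁ ∪ X P₂).ncard ≤ (X (P₁ ∪ P₂)).ncard := Set.ncard_le_ncard
    (Set.union_subset (dominatedOnlyBy_mono Set.subset_union_left)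
      (dominatedOnlyBy_mono Set.subset_union_right))
  rw [Set.ncard_union_eq hdisj] at hle
  have hP₁₂ := Set.ncard_union_add_ncard_inter P₁ P₂
  rw [hP, Set.ncard_singleton] at hP₁₂
  omega

end LeafNeighbor

theorem degree_eq_one_iff_forall_adj_eq {u v : α} [Fintype (G.neighborSet u)] (h : G.Adj u v) :
    G.degree u = 1 ↔ ∀ x, G.Adj u x → x = v := by
  rw [degree_eq_one_iff_existsUnique_adj]
  exact ⟨fun ⟨_, _, hw⟩ x hx => (hw x hx).trans (hw v h).symm, fun H => ⟨v, h, H⟩⟩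

theorem existsUnique_mem_pendantEdges [Fintype α] [DecidableRel G.Adj] {v : α}
    (h : ∃! u, G.Adj v u ∧ (G.degree v = 1 ∨ G.degree u = 1)) :
    ∃! e, e ∈ pendantEdges G ∧ v ∈ e := by
  obtain ⟨u, ⟨hvu, hdeg⟩, huniq⟩ := h
  refine ⟨s(v, u), ⟨⟨hvu, ?_⟩, Sym2.mem_mk_left _ _⟩, ?_⟩
  · rcases hdeg with h | h
    exacts [⟨v, Sym2.mem_mk_left _ _, h⟩, ⟨u, Sym2.mem_mk_right _ _, h⟩]
  · rintro e ⟨⟨he, w, hw, hw1⟩, hve⟩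
    obtain ⟨x, rfl⟩ := Sym2.mem_iff_exists.1 hve
    rcases Sym2.mem_iff.1 hw with rfl | rfl
    · rw [huniq x ⟨he, Or.inl hw1⟩]
    · rw [huniq w ⟨he, Or.inr hw1⟩]

end SimpleGraph

open SimpleGraph

/-- Finbow–Hartnell: a connected well-covered graph with girth at least 8 and at least
two vertices has its pendant edges forming a perfect matching. -/
theorem pendant_matching_of_wellCovered
    (G : SimpleGraph V) [DecidableRel G.Adj]
    (hconn : G.Connected) (hgirth : 8 ≤ G.egirth) (hcard : 2 ≤ Fintype.card V)
    (hwc : ∀ S T : Set V,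
      G.IsIndepSet' S → (∀ S', G.IsIndepSet' S' → S ⊆ S' → S = S') →
      G.IsIndepSet' T → (∀ T', G.IsIndepSet' T' → T ⊆ T' → T = T') →
      S.ncard = T.ncard) :
    ∀ v : V, ∃! e, e ∈ pendantEdges G ∧ v ∈ e := by
  have hwc : G.WellCovered := fun S T hS hT =>
    hwc S T hS.1 (fun _ => hS.eq_of_subset) hT.1 (fun _ => hT.eq_of_subset)
  have : Nontrivial V := Fintype.one_lt_card_iff_nontrivial.1 hcard
  intro v
  apply existsUnique_mem_pendantEdges
  obtain hv | hv : G.degree v = 1 ∨ 1 < G.degree v := by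
    have := hconn.preconnected.degree_pos_of_nontrivial v
    omega
  · obtain ⟨u, hu, huniq⟩ := degree_eq_one_iff_existsUnique_adj.1 hv
    exact ⟨u, ⟨hu, Or.inl hv⟩, fun x hx => huniq x hx.1⟩
  · obtain ⟨u₁, h₁, u₂, h₂, hne⟩ := Finset.one_lt_card.1 (G.card_neighborFinset_eq_degree v ▸ hv)
    obtain ⟨u, hvu, hu⟩ := hwc.exists_adj_forall_adj_eq hgirth
      ((G.mem_neighborFinset _ _).1 h₁) ((G.mem_neighborFinset _ _).1 h₂) hne
    refine ⟨u, ⟨hvu, Or.inr ((degree_eq_one_iff_forall_adj_eq hvu.symm).2 hu)⟩, ?_⟩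
    rintro x ⟨hvx, hx⟩
    exact hwc.eq_of_adj_of_forall_adj_eq hvx hvu
      ((degree_eq_one_iff_forall_adj_eq hvx.symm).1 (hx.resolve_left hv.ne')) hu
end
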